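/- Let L be a 0-perfect 3-graded Lie algebra and let υ : ûTKK(F(L)) → L be the canonical graded central 0-extension, where F(L) = (L₋₁, L₁) is the induced Jordan pair. Then υ is universal among central 0-extensions: for every graded surjective Lie homomorphism φ : K → L with kernel contained in K₀ ∩ Z(K), there is a unique graded Lie homomorphism ψ : ûTKK(F(L)) → K with φ∘ψ = υ. -/

import Mathlib

/-- A (not yet bundled) Lie bracket on a `k`-module: bilinear, alternating,
and satisfying the Jacobi (Leibniz) identity. -/
def IsLieBracket {k V : Type*} [CommRing k] [AddCommGroup V] [Module k V]
    (B : V → V → V) : Prop :=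
  (∀ x y z, B (x + y) z = B x z + B y z) ∧
  (∀ x y z, B x (y + z) = B x y + B x z) ∧
  (∀ (c : k) x y, B (c • x) y = c • B x y) ∧
  (∀ (c : k) x y, B x (c • y) = c • B x y) ∧
  (∀ x, B x x = 0) ∧
  (∀ x y z, B x (B y z) = B (B x y) z + B y (B x z))

/-- A 3-grading `L = Lm ⊕ Lz ⊕ Lp` (degrees -1, 0, 1) of a Lie algebra `L`. -/
structure IsGrading3 (k : Type*) [CommRing k] (L : Type*) [LieRing L] [LieAlgebra k L]
    (Lm Lz Lp : Submodule k L) : Prop where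
  decomp : ∀ x : L, ∃ a ∈ Lm, ∃ b ∈ Lz, ∃ c ∈ Lp, x = a + b + c
  indep : ∀ a ∈ Lm, ∀ b ∈ Lz, ∀ c ∈ Lp, a + b + c = 0 → a = 0 ∧ b = 0 ∧ c = 0
  mm : ∀ x ∈ Lm, ∀ y ∈ Lm, ⁅x, y⁆ = 0
  pp : ∀ x ∈ Lp, ∀ y ∈ Lp, ⁅x, y⁆ = 0
  mz : ∀ x ∈ Lm, ∀ y ∈ Lz, ⁅x, y⁆ ∈ Lm
  pz : ∀ x ∈ Lp, ∀ y ∈ Lz, ⁅x, y⁆ ∈ Lp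
  zz : ∀ x ∈ Lz, ∀ y ∈ Lz, ⁅x, y⁆ ∈ Lz
  mp : ∀ x ∈ Lm, ∀ y ∈ Lp, ⁅x, y⁆ ∈ Lz

/-!
Since the kernel of `φ` lies in `K₀`, the grading forces `φ` to restrict to isomorphisms
`K₋₁ ≅ L₋₁` and `K₁ ≅ L₁`. Their inverses `σ₋, σ₊` respect the triple products
`[[a, b], c]`: the bracket `[[σ₋ a, σ₊ b], σ₋ c]` again lies in `K₋₁` and has the right image.
Consequently `a ⊗ b ↦ [σ₋ a, σ₊ b]` kills the relations defining `⟨L₋₁, L₁⟩`, and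
`ψ = σ₋ + (a ⊗ b ↦ [σ₋ a, σ₊ b]) + σ₊` is a Lie homomorphism, because both sides of
`ψ [p, q] = [ψ p, ψ q]` are bilinear and agree on generators. Any other `ψ'` agrees with `ψ`
in degrees `±1` by injectivity of `φ` there, and in degree `0` since `(0, a ⊗ b, 0)` is the
bracket of `(a, 0, 0)` and `(0, 0, b)`.
-/

open scoped TensorProduct

theorem lie_lie_eq_lie_lie_lie_sub {L : Type*} [LieRing L] (a b c d : L) :
    ⁅⁅a, b⁆, ⁅c, d⁆⁆ = ⁅⁅⁅a, b⁆, c⁆, d⁆ - ⁅c, ⁅⁅b, a⁆, d⁆⁆ := by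
  rw [← lie_skew b a, neg_lie, lie_neg, sub_neg_eq_add]
  exact leibniz_lie _ _ _

namespace IsLieBracket

variable {k V : Type*} [CommRing k] [AddCommGroup V] [Module k V] {B : V → V → V}

theorem skew (hB : IsLieBracket (k := k) B) (p q : V) : B q p = -B p q := by
  obtain ⟨hl, hr, -, -, halt, -⟩ := hB
  have h := halt (p + q)
  rw [hl, hr, hr, halt, halt, zero_add, add_zero] at h
  exact eq_neg_of_add_eq_zero_right h

def bracketRight (hB : IsLieBracket (k := k) B) (p : V) : V →ₗ[k] V where
  toFun := B p
  map_add' := hB.2.1 p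
  map_smul' c := hB.2.2.2.1 c p

end IsLieBracket

namespace IsGrading3

variable {k L : Type*} [CommRing k] [LieRing L] [LieAlgebra k L] {Lm Lz Lp : Submodule k L}

theorem swap (h : IsGrading3 k L Lm Lz Lp) : IsGrading3 k L Lp Lz Lm where
  decomp x := by
    obtain ⟨a, ha, b, hb, c, hc, rfl⟩ := h.decomp x
    exact ⟨c, hc, b, hb, a, ha, by abel⟩
  indep c hc b hb a ha hsum := by
    obtain ⟨h1, h2, h3⟩ := h.indep a ha b hb c hc (by rw [← hsum]; abel)
    exact ⟨h3, h2, h1⟩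
  mm := h.pp
  pp := h.mm
  mz := h.pz
  pz := h.mz
  zz := h.zz
  mp x hx y hy := by
    rw [← lie_skew]
    exact Lz.neg_mem (h.mp y hy x hx)

theorem eq_zero_of_mem_minus_of_mem_zero (h : IsGrading3 k L Lm Lz Lp) {x : L}
    (hm : x ∈ Lm) (hz : x ∈ Lz) : x = 0 :=
  (h.indep x hm (-x) (Lz.neg_mem hz) 0 Lp.zero_mem (by abel)).1

theorem lie_lie_mem_minus (h : IsGrading3 k L Lm Lz Lp) {a b c : L}
    (ha : a ∈ Lm) (hb : b ∈ Lp) (hc : c ∈ Lm) : ⁅⁅a, b⁆, c⁆ ∈ Lm := by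
  rw [← lie_skew]
  exact Lm.neg_mem (h.mz c hc _ (h.mp a ha b hb))

end IsGrading3

structure IsZeroExtension {k K L : Type*} [CommRing k] [LieRing K] [LieAlgebra k K]
    [LieRing L] [LieAlgebra k L] (φ : K →ₗ⁅k⁆ L)
    (Km Kz Kp : Submodule k K) (Lm Lz Lp : Submodule k L) : Prop where
  maps_minus : ∀ x ∈ Km, φ x ∈ Lm
  maps_zero : ∀ x ∈ Kz, φ x ∈ Lz
  maps_plus : ∀ x ∈ Kp, φ x ∈ Lp
  surjective : Function.Surjective φ
  ker_le : ∀ x, φ x = 0 → x ∈ Kz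

namespace IsZeroExtension

variable {k K L : Type*} [CommRing k] [LieRing K] [LieAlgebra k K] [LieRing L] [LieAlgebra k L]
  {φ : K →ₗ⁅k⁆ L} {Km Kz Kp : Submodule k K} {Lm Lz Lp : Submodule k L}

theorem swap (hφ : IsZeroExtension φ Km Kz Kp Lm Lz Lp) :
    IsZeroExtension φ Kp Kz Km Lp Lz Lm :=
  ⟨hφ.maps_plus, hφ.maps_zero, hφ.maps_minus, hφ.surjective, hφ.ker_le⟩

theorem injOn_minus (hK : IsGrading3 k K Km Kz Kp) (hφ : IsZeroExtension φ Km Kz Kp Lm Lz Lp) :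
    Set.InjOn φ Km := fun x hx y hy hxy =>
  sub_eq_zero.mp <| hK.eq_zero_of_mem_minus_of_mem_zero (Km.sub_mem hx hy)
    (hφ.ker_le _ (by rw [map_sub, hxy, sub_self]))

theorem exists_mem_minus_apply_eq (hK : IsGrading3 k K Km Kz Kp)
    (hL : IsGrading3 k L Lm Lz Lp) (hφ : IsZeroExtension φ Km Kz Kp Lm Lz Lp) {a : L}
    (ha : a ∈ Lm) : ∃ x ∈ Km, φ x = a := by
  obtain ⟨x, rfl⟩ := hφ.surjective a
  obtain ⟨xm, hm, xz, hz, xp, hp, rfl⟩ := hK.decomp x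
  have h := hL.indep _ (Lm.sub_mem (hφ.maps_minus xm hm) ha) _ (hφ.maps_zero xz hz) _
    (hφ.maps_plus xp hp) (by rw [map_add, map_add]; abel)
  exact ⟨xm, hm, sub_eq_zero.mp h.1⟩

noncomputable def minusEquiv (hK : IsGrading3 k K Km Kz Kp) (hL : IsGrading3 k L Lm Lz Lp)
    (hφ : IsZeroExtension φ Km Kz Kp Lm Lz Lp) : Lm ≃ₗ[k] Km :=
  (LinearEquiv.ofBijective ((φ : K →ₗ[k] L).restrict hφ.maps_minus)
    ⟨fun x y h => Subtype.ext (hφ.injOn_minus hK x.2 y.2 (congrArg Subtype.val h)),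
      fun a => by
        obtain ⟨x, hx, hxa⟩ := hφ.exists_mem_minus_apply_eq hK hL a.2
        exact ⟨⟨x, hx⟩, Subtype.ext hxa⟩⟩).symm

noncomputable def plusEquiv (hK : IsGrading3 k K Km Kz Kp) (hL : IsGrading3 k L Lm Lz Lp)
    (hφ : IsZeroExtension φ Km Kz Kp Lm Lz Lp) : Lp ≃ₗ[k] Kp :=
  hφ.swap.minusEquiv hK.swap hL.swap

variable (hK : IsGrading3 k K Km Kz Kp) (hL : IsGrading3 k L Lm Lz Lp)
  (hφ : IsZeroExtension φ Km Kz Kp Lm Lz Lp)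

@[simp]
theorem apply_minusEquiv (a : Lm) : φ (hφ.minusEquiv hK hL a) = a :=
  congrArg Subtype.val (LinearEquiv.apply_symm_apply (hφ.minusEquiv hK hL).symm a)

@[simp]
theorem apply_plusEquiv (b : Lp) : φ (hφ.plusEquiv hK hL b) = b :=
  hφ.swap.apply_minusEquiv hK.swap hL.swap b

theorem eq_minusEquiv {x : K} (hx : x ∈ Km) {a : Lm} (h : φ x = a) :
    x = hφ.minusEquiv hK hL a :=
  hφ.injOn_minus hK hx (hφ.minusEquiv hK hL a).2 (by simp [h])

theorem eq_plusEquiv {x : K} (hx : x ∈ Kp) {b : Lp} (h : φ x = b) :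
    x = hφ.plusEquiv hK hL b :=
  hφ.swap.eq_minusEquiv hK.swap hL.swap hx h

theorem minusEquiv_eq_lie_lie {a c x : Lm} {b : Lp}
    (hx : (x : L) = ⁅⁅(a : L), (b : L)⁆, (c : L)⁆) :
    (hφ.minusEquiv hK hL x : K) =
      ⁅⁅(hφ.minusEquiv hK hL a : K), (hφ.plusEquiv hK hL b : K)⁆, (hφ.minusEquiv hK hL c : K)⁆ :=
  (hφ.eq_minusEquiv hK hL (hK.lie_lie_mem_minus (Submodule.coe_mem _) (Submodule.coe_mem _)
    (Submodule.coe_mem _)) (by simp [hx])).symm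

theorem plusEquiv_eq_lie_lie {b d x : Lp} {a : Lm}
    (hx : (x : L) = ⁅⁅(b : L), (a : L)⁆, (d : L)⁆) :
    (hφ.plusEquiv hK hL x : K) =
      ⁅⁅(hφ.plusEquiv hK hL b : K), (hφ.minusEquiv hK hL a : K)⁆, (hφ.plusEquiv hK hL d : K)⁆ :=
  hφ.swap.minusEquiv_eq_lie_lie hK.swap hL.swap hx

end IsZeroExtension

section Tkk

variable {k M P : Type*} [CommRing k] [AddCommGroup M] [Module k M] [AddCommGroup P]
  [Module k P] {A : Submodule k (M ⊗[k] P)}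

theorem tkk_ext {V : Type*} [AddCommGroup V] [Module k V]
    {f g : M × ((M ⊗[k] P) ⧸ A) × P →ₗ[k] V}
    (hm : ∀ a, f (a, 0, 0) = g (a, 0, 0))
    (hz : ∀ a b, f (0, Submodule.Quotient.mk (a ⊗ₜ b), 0)
      = g (0, Submodule.Quotient.mk (a ⊗ₜ b), 0))
    (hp : ∀ b, f (0, 0, b) = g (0, 0, b)) : f = g := by
  ext a b
  exacts [hm a, hz a b, hp a]

variable {K : Type*} [LieRing K] [LieAlgebra k K]

def lieTensor (f : M →ₗ[k] K) (g : P →ₗ[k] K) : M ⊗[k] P →ₗ[k] K :=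
  TensorProduct.lift ((LieModule.toEnd k K K : K →ₗ[k] Module.End k K).compl₁₂ f g)

@[simp]
theorem lieTensor_tmul (f : M →ₗ[k] K) (g : P →ₗ[k] K) (a : M) (b : P) :
    lieTensor f g (a ⊗ₜ b) = ⁅f a, g b⁆ := by
  simp [lieTensor]

def tkkMap (f : M →ₗ[k] K) (g : P →ₗ[k] K) (A : Submodule k (M ⊗[k] P))
    (hA : A ≤ LinearMap.ker (lieTensor f g)) : M × ((M ⊗[k] P) ⧸ A) × P →ₗ[k] K :=
  f.coprod ((A.liftQ (lieTensor f g) hA).coprod g)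

variable {f : M →ₗ[k] K} {g : P →ₗ[k] K} {hA : A ≤ LinearMap.ker (lieTensor f g)}

@[simp]
theorem tkkMap_minus (a : M) : tkkMap f g A hA (a, 0, 0) = f a := by
  simp [tkkMap]

@[simp]
theorem tkkMap_mk (X : M ⊗[k] P) :
    tkkMap f g A hA (0, Submodule.Quotient.mk X, 0) = lieTensor f g X := by
  simp [tkkMap]

@[simp]
theorem tkkMap_plus (b : P) : tkkMap f g A hA (0, 0, b) = g b := by
  simp [tkkMap]

theorem tkkMap_zero_mem {N : Submodule k K} (h : ∀ a b, ⁅f a, g b⁆ ∈ N)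
    (X : (M ⊗[k] P) ⧸ A) : tkkMap f g A hA (0, X, 0) ∈ N := by
  obtain ⟨X, rfl⟩ := Submodule.Quotient.mk_surjective A X
  rw [tkkMap_mk]
  induction X using TensorProduct.induction_on with
  | zero => simp
  | tmul a b => simpa using h a b
  | add X Y hX hY => simpa using N.add_mem hX hY

theorem span_le_ker_lieTensor {tm : M → P → M → M} {tp : P → M → P → P}
    (hf : ∀ a c b, f (tm a b c) = ⁅⁅f a, g b⁆, f c⁆)
    (hg : ∀ b d a, g (tp b a d) = ⁅⁅g b, f a⁆, g d⁆) :
    Submodule.span k {x | ∃ a c : M, ∃ b d : P,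
      x = (tm a b c ⊗ₜ[k] d - c ⊗ₜ[k] tp b a d) + (tm c d a ⊗ₜ[k] b - a ⊗ₜ[k] tp d c b)}
      ≤ LinearMap.ker (lieTensor f g) := by
  rw [Submodule.span_le]
  rintro x ⟨a, c, b, d, rfl⟩
  -- the two halves of the relation map to `⁅X, Y⁆` and `⁅Y, X⁆`,
  -- where `X = ⁅f a, g b⁆` and `Y = ⁅f c, g d⁆`
  simp only [SetLike.mem_coe, LinearMap.mem_ker, map_add, map_sub, lieTensor_tmul, hf, hg,
    ← lie_lie_eq_lie_lie_lie_sub]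
  rw [← lie_skew ⁅f a, g b⁆, neg_add_cancel]

theorem tkkMap_bracket {tm : M → P → M → M} {tp : P → M → P → P}
    {B : (M × ((M ⊗[k] P) ⧸ A) × P) → (M × ((M ⊗[k] P) ⧸ A) × P) →
      (M × ((M ⊗[k] P) ⧸ A) × P)}
    (hB : IsLieBracket (k := k) B)
    (hBmm : ∀ a c : M, B (a, 0, 0) (c, 0, 0) = 0)
    (hBpp : ∀ b d : P, B (0, 0, b) (0, 0, d) = 0)
    (hBmp : ∀ (a : M) (b : P), B (a, 0, 0) (0, 0, b)
      = (0, Submodule.Quotient.mk (a ⊗ₜ[k] b), 0))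
    (hBzm : ∀ (a c : M) (b : P),
      B (0, Submodule.Quotient.mk (a ⊗ₜ[k] b), 0) (c, 0, 0) = (tm a b c, 0, 0))
    (hBzp : ∀ (a : M) (b d : P),
      B (0, Submodule.Quotient.mk (a ⊗ₜ[k] b), 0) (0, 0, d) = (0, 0, -(tp b a d)))
    (hBzz : ∀ (a c : M) (b d : P),
      B (0, Submodule.Quotient.mk (a ⊗ₜ[k] b), 0)
        (0, Submodule.Quotient.mk (c ⊗ₜ[k] d), 0)
      = (0, Submodule.Quotient.mk (tm a b c ⊗ₜ[k] d)
            - Submodule.Quotient.mk (c ⊗ₜ[k] tp b a d), 0))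
    (hff : ∀ a c, ⁅f a, f c⁆ = 0) (hgg : ∀ b d, ⁅g b, g d⁆ = 0)
    (hf : ∀ a c b, f (tm a b c) = ⁅⁅f a, g b⁆, f c⁆)
    (hg : ∀ b d a, g (tp b a d) = ⁅⁅g b, f a⁆, g d⁆) (p q : M × ((M ⊗[k] P) ⧸ A) × P) :
    tkkMap f g A hA (B p q) = ⁅tkkMap f g A hA p, tkkMap f g A hA q⁆ := by
  set ψ := tkkMap f g A hA
  have of_generators : ∀ p, (∀ c, ψ (B p (c, 0, 0)) = ⁅ψ p, ψ (c, 0, 0)⁆) →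
      (∀ c d, ψ (B p (0, Submodule.Quotient.mk (c ⊗ₜ d), 0))
        = ⁅ψ p, ψ (0, Submodule.Quotient.mk (c ⊗ₜ d), 0)⁆) →
      (∀ d, ψ (B p (0, 0, d)) = ⁅ψ p, ψ (0, 0, d)⁆) → ∀ q, ψ (B p q) = ⁅ψ p, ψ q⁆ :=
    fun p hm hz hp => LinearMap.congr_fun
      (tkk_ext (f := ψ ∘ₗ hB.bracketRight p) (g := LieModule.toEnd k K K (ψ p) ∘ₗ ψ) hm hz hp)
  have swap : ∀ p q, ψ (B p q) = ⁅ψ p, ψ q⁆ → ψ (B q p) = ⁅ψ q, ψ p⁆ := fun p q h => by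
    rw [hB.skew, map_neg, h, lie_skew]
  have hm : ∀ a q, ψ (B (a, 0, 0) q) = ⁅ψ (a, 0, 0), ψ q⁆ := fun a =>
    of_generators _ (fun c => by simp [ψ, hBmm, hff])
      (fun c d => swap _ _ (by simp [ψ, hBzm, hf]))
      (fun d => by simp [ψ, hBmp])
  have hz : ∀ a b q, ψ (B (0, Submodule.Quotient.mk (a ⊗ₜ b), 0) q)
      = ⁅ψ (0, Submodule.Quotient.mk (a ⊗ₜ b), 0), ψ q⁆ := fun a b =>
    of_generators _ (fun c => by simp [ψ, hBzm, hf])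
      (fun c d => by
        rw [hBzz, ← Submodule.Quotient.mk_sub]
        simp only [ψ, tkkMap_mk, map_sub, lieTensor_tmul, hf, hg]
        exact (lie_lie_eq_lie_lie_lie_sub _ _ _ _).symm)
      (fun d => by simp [ψ, hBzp, hg])
  have hp : ∀ b q, ψ (B (0, 0, b) q) = ⁅ψ (0, 0, b), ψ q⁆ := fun b =>
    of_generators _ (fun c => swap _ _ (hm c _)) (fun c d => swap _ _ (hz c d _))
      (fun d => by simp [ψ, hBpp, hgg])
  exact of_generators p (fun c => swap _ _ (hm c p)) (fun c d => swap _ _ (hz c d p))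
    (fun d => swap _ _ (hp d p)) q

end Tkk

theorem stmt16_general {k : Type u} [CommRing k]
    {L : Type v} [LieRing L] [LieAlgebra k L]
    (Lm Lz Lp : Submodule k L) (hgr : IsGrading3 k L Lm Lz Lp)
    -- the induced Jordan pair F(L) = (L₋₁, L₁), {a,b,c} = [[a,b],c]
    (tm : Lm → Lp → Lm → Lm) (tp : Lp → Lm → Lp → Lp)
    (htm : ∀ (a c : Lm) (b : Lp), (tm a b c : L) = ⁅⁅(a : L), (b : L)⁆, (c : L)⁆)
    (htp : ∀ (b d : Lp) (a : Lm), (tp b a d : L) = ⁅⁅(b : L), (a : L)⁆, (d : L)⁆)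
    -- ûTKK(F(L)) = L₋₁ × ⟨L₋₁,L₁⟩ × L₁
    (A : Submodule k (Lm ⊗[k] Lp))
    (hA : A = Submodule.span k {x | ∃ a c : Lm, ∃ b d : Lp,
      x = (tm a b c ⊗ₜ[k] d - c ⊗ₜ[k] tp b a d)
        + (tm c d a ⊗ₜ[k] b - a ⊗ₜ[k] tp d c b)})
    (B : (Lm × ((Lm ⊗[k] Lp) ⧸ A) × Lp) → (Lm × ((Lm ⊗[k] Lp) ⧸ A) × Lp) →
         (Lm × ((Lm ⊗[k] Lp) ⧸ A) × Lp))
    (hB : IsLieBracket (k := k) B)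
    (hBmm : ∀ a c : Lm, B (a, 0, 0) (c, 0, 0) = 0)
    (hBpp : ∀ b d : Lp, B (0, 0, b) (0, 0, d) = 0)
    (hBmp : ∀ (a : Lm) (b : Lp), B (a, 0, 0) (0, 0, b)
      = (0, Submodule.Quotient.mk (a ⊗ₜ[k] b), 0))
    (hBzm : ∀ (a c : Lm) (b : Lp),
      B (0, Submodule.Quotient.mk (a ⊗ₜ[k] b), 0) (c, 0, 0) = (tm a b c, 0, 0))
    (hBzp : ∀ (a : Lm) (b d : Lp),
      B (0, Submodule.Quotient.mk (a ⊗ₜ[k] b), 0) (0, 0, d) = (0, 0, -(tp b a d)))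
    (hBzz : ∀ (a c : Lm) (b d : Lp),
      B (0, Submodule.Quotient.mk (a ⊗ₜ[k] b), 0)
        (0, Submodule.Quotient.mk (c ⊗ₜ[k] d), 0)
      = (0, Submodule.Quotient.mk (tm a b c ⊗ₜ[k] d)
            - Submodule.Quotient.mk (c ⊗ₜ[k] tp b a d), 0))
    -- the canonical map υ : ûTKK(F(L)) → L extending the identity on (L₋₁, L₁)
    (υ : (Lm × ((Lm ⊗[k] Lp) ⧸ A) × Lp) →ₗ[k] L)
    (hυm : ∀ a : Lm, υ (a, 0, 0) = (a : L))
    (hυp : ∀ b : Lp, υ (0, 0, b) = (b : L))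
    (hυz : ∀ (a : Lm) (b : Lp),
      υ (0, Submodule.Quotient.mk (a ⊗ₜ[k] b), 0) = ⁅(a : L), (b : L)⁆) :
    -- universality: every central 0-extension of L factors uniquely through υ
    ∀ (K : Type w) (_ : LieRing K) (_ : LieAlgebra k K)
      (Km Kz Kp : Submodule k K) (_ : IsGrading3 k K Km Kz Kp)
      (φ : K →ₗ⁅k⁆ L),
      (∀ x ∈ Km, φ x ∈ Lm) → (∀ x ∈ Kz, φ x ∈ Lz) → (∀ x ∈ Kp, φ x ∈ Lp) →
      Function.Surjective φ →
      (∀ x : K, φ x = 0 → x ∈ Kz) →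
      (∀ x : K, φ x = 0 → ∀ y : K, ⁅x, y⁆ = 0) →
      ∃! ψ : (Lm × ((Lm ⊗[k] Lp) ⧸ A) × Lp) →ₗ[k] K,
        (∀ p q, ψ (B p q) = ⁅ψ p, ψ q⁆) ∧
        (∀ a : Lm, ψ (a, 0, 0) ∈ Km) ∧
        (∀ X : (Lm ⊗[k] Lp) ⧸ A, ψ (0, X, 0) ∈ Kz) ∧
        (∀ b : Lp, ψ (0, 0, b) ∈ Kp) ∧
        (∀ p, φ (ψ p) = υ p) := by
  intro K _ _ Km Kz Kp hK φ hφm hφz hφp hsurj hker _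
  have hφ : IsZeroExtension φ Km Kz Kp Lm Lz Lp := ⟨hφm, hφz, hφp, hsurj, hker⟩
  set σm := Km.subtype ∘ₗ (hφ.minusEquiv hK hgr : Lm →ₗ[k] Km)
  set σp := Kp.subtype ∘ₗ (hφ.plusEquiv hK hgr : Lp →ₗ[k] Kp)
  have hσm : ∀ a c b, σm (tm a b c) = ⁅⁅σm a, σp b⁆, σm c⁆ := fun a c b =>
    hφ.minusEquiv_eq_lie_lie hK hgr (htm a c b)
  have hσp : ∀ b d a, σp (tp b a d) = ⁅⁅σp b, σm a⁆, σp d⁆ := fun b d a =>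
    hφ.plusEquiv_eq_lie_lie hK hgr (htp b d a)
  have hAker : A ≤ LinearMap.ker (lieTensor σm σp) := hA ▸ span_le_ker_lieTensor hσm hσp
  set ψ := tkkMap σm σp A hAker
  have hψ : ∀ p q, ψ (B p q) = ⁅ψ p, ψ q⁆ :=
    tkkMap_bracket hB hBmm hBpp hBmp hBzm hBzp hBzz
      (fun a c => hK.mm _ (Submodule.coe_mem _) _ (Submodule.coe_mem _))
      (fun b d => hK.pp _ (Submodule.coe_mem _) _ (Submodule.coe_mem _)) hσm hσp
  have hφψ : (φ : K →ₗ[k] L) ∘ₗ ψ = υ :=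
    tkk_ext (fun a => by simp [ψ, σm, hυm]) (fun a b => by simp [ψ, σm, σp, hυz])
      (fun b => by simp [ψ, σp, hυp])
  refine ⟨ψ, ⟨hψ, fun a => by simp [ψ, σm],
    tkkMap_zero_mem fun a b => hK.mp _ (Submodule.coe_mem _) _ (Submodule.coe_mem _),
    fun b => by simp [ψ, σp], LinearMap.congr_fun hφψ⟩, ?_⟩
  rintro ψ' ⟨hψ', hm', -, hp', hφψ'⟩
  have hψ'm : ∀ a, ψ' (a, 0, 0) = ψ (a, 0, 0) := fun a => by
    simpa [ψ, σm] using hφ.eq_minusEquiv hK hgr (hm' a) (by rw [hφψ', hυm])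
  have hψ'p : ∀ b, ψ' (0, 0, b) = ψ (0, 0, b) := fun b => by
    simpa [ψ, σp] using hφ.eq_plusEquiv hK hgr (hp' b) (by rw [hφψ', hυp])
  exact tkk_ext hψ'm (fun a b => by rw [← hBmp, hψ', hψ, hψ'm, hψ'p]) hψ'p

/-- If `L` is a 0-perfect 3-graded Lie algebra and
`υ : ûTKK(F(L)) → L` is the canonical graded central 0-extension, where
`F(L) = (L₋₁, L₁)` is the induced Jordan pair, then `υ` is universal among
central 0-extensions: every graded surjective Lie homomorphism `φ : K → L`
with kernel in `K₀ ∩ Z(K)` admits a unique graded Lie homomorphism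
`ψ : ûTKK(F(L)) → K` with `φ ∘ ψ = υ`. -/
theorem stmt16 {k : Type u} [CommRing k]
    {L : Type v} [LieRing L] [LieAlgebra k L]
    (Lm Lz Lp : Submodule k L) (hgr : IsGrading3 k L Lm Lz Lp)
    -- L is 0-perfect
    (hperf : Lz ≤ Submodule.span k {x : L | ∃ a ∈ Lm, ∃ b ∈ Lp, x = ⁅a, b⁆})
    -- the induced Jordan pair F(L) = (L₋₁, L₁), {a,b,c} = [[a,b],c]
    (tm : Lm → Lp → Lm → Lm) (tp : Lp → Lm → Lp → Lp)
    (htm : ∀ (a c : Lm) (b : Lp), (tm a b c : L) = ⁅⁅(a : L), (b : L)⁆, (c : L)⁆)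
    (htp : ∀ (b d : Lp) (a : Lm), (tp b a d : L) = ⁅⁅(b : L), (a : L)⁆, (d : L)⁆)
    -- ûTKK(F(L)) = L₋₁ × ⟨L₋₁,L₁⟩ × L₁
    (A : Submodule k (Lm ⊗[k] Lp))
    (hA : A = Submodule.span k {x | ∃ a c : Lm, ∃ b d : Lp,
      x = (tm a b c ⊗ₜ[k] d - c ⊗ₜ[k] tp b a d)
        + (tm c d a ⊗ₜ[k] b - a ⊗ₜ[k] tp d c b)})
    (B : (Lm × ((Lm ⊗[k] Lp) ⧸ A) × Lp) → (Lm × ((Lm ⊗[k] Lp) ⧸ A) × Lp) →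
         (Lm × ((Lm ⊗[k] Lp) ⧸ A) × Lp))
    (hB : IsLieBracket (k := k) B)
    (hBmm : ∀ a c : Lm, B (a, 0, 0) (c, 0, 0) = 0)
    (hBpp : ∀ b d : Lp, B (0, 0, b) (0, 0, d) = 0)
    (hBmp : ∀ (a : Lm) (b : Lp), B (a, 0, 0) (0, 0, b)
      = (0, Submodule.Quotient.mk (a ⊗ₜ[k] b), 0))
    (hBzm : ∀ (a c : Lm) (b : Lp),
      B (0, Submodule.Quotient.mk (a ⊗ₜ[k] b), 0) (c, 0, 0) = (tm a b c, 0, 0))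
    (hBzp : ∀ (a : Lm) (b d : Lp),
      B (0, Submodule.Quotient.mk (a ⊗ₜ[k] b), 0) (0, 0, d) = (0, 0, -(tp b a d)))
    (hBzz : ∀ (a c : Lm) (b d : Lp),
      B (0, Submodule.Quotient.mk (a ⊗ₜ[k] b), 0)
        (0, Submodule.Quotient.mk (c ⊗ₜ[k] d), 0)
      = (0, Submodule.Quotient.mk (tm a b c ⊗ₜ[k] d)
            - Submodule.Quotient.mk (c ⊗ₜ[k] tp b a d), 0))
    -- the canonical map υ : ûTKK(F(L)) → L extending the identity on (L₋₁, L₁)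
    (υ : (Lm × ((Lm ⊗[k] Lp) ⧸ A) × Lp) →ₗ[k] L)
    (hυm : ∀ a : Lm, υ (a, 0, 0) = (a : L))
    (hυp : ∀ b : Lp, υ (0, 0, b) = (b : L))
    (hυz : ∀ (a : Lm) (b : Lp),
      υ (0, Submodule.Quotient.mk (a ⊗ₜ[k] b), 0) = ⁅(a : L), (b : L)⁆)
    (hυlie : ∀ p q, υ (B p q) = ⁅υ p, υ q⁆) :
    -- universality: every central 0-extension of L factors uniquely through υ
    ∀ (K : Type w) (_ : LieRing K) (_ : LieAlgebra k K)
      (Km Kz Kp : Submodule k K) (_ : IsGrading3 k K Km Kz Kp)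
      (φ : K →ₗ⁅k⁆ L),
      (∀ x ∈ Km, φ x ∈ Lm) → (∀ x ∈ Kz, φ x ∈ Lz) → (∀ x ∈ Kp, φ x ∈ Lp) →
      Function.Surjective φ →
      (∀ x : K, φ x = 0 → x ∈ Kz) →
      (∀ x : K, φ x = 0 → ∀ y : K, ⁅x, y⁆ = 0) →
      ∃! ψ : (Lm × ((Lm ⊗[k] Lp) ⧸ A) × Lp) →ₗ[k] K,
        (∀ p q, ψ (B p q) = ⁅ψ p, ψ q⁆) ∧
        (∀ a : Lm, ψ (a, 0, 0) ∈ Km) ∧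
        (∀ X : (Lm ⊗[k] Lp) ⧸ A, ψ (0, X, 0) ∈ Kz) ∧
        (∀ b : Lp, ψ (0, 0, b) ∈ Kp) ∧
        (∀ p, φ (ψ p) = υ p) :=
  stmt16_general Lm Lz Lp hgr tm tp htm htp A hA B hB hBmm hBpp hBmp hBzm hBzp hBzz υ hυm hυp hυz
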